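/- arXiv:1701.05751 — 2 statements merged into one kernel-verified Lean document; each statement's English description precedes it below -/
import Mathlib

section
/- For any monotone submodular set function f : 2^V → ℝ≥0 with f(∅) = 0, the greedy algorithm that iteratively adds the element with maximum marginal gain produces a set S_k of size k satisfying f(S_k) ≥ (1 − (1−1/k)^k)·max_{|T|=k} f(T) ≥ (1 − 1/e)·max_{|T|=k} f(T). -/
/-- Greedy guarantee for monotone submodular maximization: any greedy sequence
`g 0 = ∅`, `g (i+1) = insert x (g i)` with `x` of maximal marginal gain, satisfies
`f (g k) ≥ (1 - (1 - 1/k)^k) · f T ≥ (1 - 1/e) · f T` for every `T` with `|T| = k`. -/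
theorem greedy_approximation {V : Type*} [Fintype V] [DecidableEq V]
    (f : Finset V → ℝ)
    (hnonneg : ∀ S, 0 ≤ f S)
    (hempty : f ∅ = 0)
    (hmono : ∀ S T : Finset V, S ⊆ T → f S ≤ f T)
    (hsub : ∀ (S T : Finset V) (x : V), S ⊆ T →
      f (insert x S) - f S ≥ f (insert x T) - f T)
    (k : ℕ) (hk : 0 < k)
    (g : ℕ → Finset V)
    (hg0 : g 0 = ∅)
    (hgreedy : ∀ i < k, ∃ x : V, g (i + 1) = insert x (g i) ∧
      ∀ y : V, f (insert y (g i)) - f (g i) ≤ f (insert x (g i)) - f (g i)) :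
    ∀ T : Finset V, T.card = k →
      (1 - (1 - 1 / (k : ℝ)) ^ k) * f T ≤ f (g k) ∧
      (1 - 1 / Real.exp 1) * f T ≤ (1 - (1 - 1 / (k : ℝ)) ^ k) * f T := by
  intro T hT
  have hk1 : (1:ℝ) ≤ (k:ℝ) := by exact_mod_cast hk
  have hkpos : (0:ℝ) < (k:ℝ) := by exact_mod_cast hk
  have h1k : 0 ≤ 1 - 1/(k:ℝ) := by
    rw [sub_nonneg, div_le_one hkpos]; exact hk1
  -- submodularity sum bound
  have hsum : ∀ (S A : Finset V), f (S ∪ A) - f S ≤ ∑ x ∈ A, (f (insert x S) - f S) := by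
    intro S A
    induction A using Finset.induction_on with
    | empty => simp
    | @insert a A' ha ih =>
      rw [Finset.sum_insert ha]
      have h1 : S ∪ insert a A' = insert a (S ∪ A') := by
        ext z; simp [or_comm, or_left_comm]
      have h2 := hsub S (S ∪ A') a Finset.subset_union_left
      rw [h1]
      linarith
  -- key recursion step
  have hstep : ∀ i < k, f T - f (g (i+1)) ≤ (1 - 1/(k:ℝ)) * (f T - f (g i)) := by
    intro i hi
    obtain ⟨x, hx, hmax⟩ := hgreedy i hi
    set S := g i with hS
    have h1 : f T - f S ≤ (f (g (i+1)) - f S) * (k:ℝ) := by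
      have hTle : f T ≤ f (S ∪ T) := hmono T (S ∪ T) Finset.subset_union_right
      have h2 := hsum S T
      have h3 : ∑ x ∈ T, (f (insert x S) - f S) ≤ ∑ _x ∈ T, (f (g (i+1)) - f S) :=
        Finset.sum_le_sum (fun y _ => by rw [hx]; exact hmax y)
      rw [Finset.sum_const, hT, nsmul_eq_mul, mul_comm] at h3
      linarith
    have hdiv : (f T - f S)/(k:ℝ) ≤ f (g (i+1)) - f S := (div_le_iff₀ hkpos).mpr h1
    have hexp : (1 - 1/(k:ℝ)) * (f T - f S) = (f T - f S) - (f T - f S)/(k:ℝ) := by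
      field_simp
    linarith
  -- main induction
  have hmain : ∀ i, i ≤ k → f T - f (g i) ≤ (1 - 1/(k:ℝ))^i * f T := by
    intro i
    induction i with
    | zero => intro _; simp [hg0, hempty]
    | succ n ih =>
      intro hn
      have hn' : n < k := hn
      calc f T - f (g (n+1)) ≤ (1 - 1/(k:ℝ)) * (f T - f (g n)) := hstep n hn'
        _ ≤ (1 - 1/(k:ℝ)) * ((1 - 1/(k:ℝ))^n * f T) :=
            mul_le_mul_of_nonneg_left (ih hn'.le) h1k
        _ = (1 - 1/(k:ℝ))^(n+1) * f T := by ring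
  constructor
  · have := hmain k le_rfl
    nlinarith [this]
  · have he : (1 - 1/(k:ℝ)) ≤ Real.exp (-(1/(k:ℝ))) := by
      have := Real.add_one_le_exp (-(1/(k:ℝ))); linarith
    have hpow : (1 - 1/(k:ℝ))^k ≤ Real.exp (-(1/(k:ℝ)))^k :=
      pow_le_pow_left₀ h1k he k
    have heq : Real.exp (-(1/(k:ℝ)))^k = Real.exp (-1) := by
      rw [← Real.exp_nat_mul]
      congr 1
      field_simp
    rw [heq, Real.exp_neg] at hpow
    have hinv : (Real.exp 1)⁻¹ = 1 / Real.exp 1 := by rw [one_div]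
    rw [hinv] at hpow
    have : 1 - 1 / Real.exp 1 ≤ 1 - (1 - 1/(k:ℝ))^k := by linarith
    exact mul_le_mul_of_nonneg_right this (hnonneg T)
end

section
/- For each node u, the combined pignistic probability BetP_u(I) obtained from Dempster combination of the follow, retweet and mention BBAs is nondecreasing in each singleton mass m_x(I): if m_f(I) increases (with the increase taken from m_f({I,P}), keeping m_f(P) fixed), then BetP(I) of the combined BBA does not decrease. -/
/-- A BBA on the frame `Ω = {I,P}` given by the masses `(m({I}), m({P}), m({I,P}))`. -/
structure BBA2 where
  mI : ℝ
  mP : ℝ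
  mIP : ℝ
  mI_nonneg : 0 ≤ mI
  mP_nonneg : 0 ≤ mP
  mIP_nonneg : 0 ≤ mIP
  sum_one : mI + mP + mIP = 1

/-- The Dempster conflict on `Ω = {I,P}`: `K = m₁({I})m₂({P}) + m₁({P})m₂({I})`. -/
def BBA2.K (m₁ m₂ : BBA2) : ℝ := m₁.mI * m₂.mP + m₁.mP * m₂.mI

/-- The unnormalized conjunctive masses, normalized by `1 - K`
(Dempster's rule on `Ω = {I,P}`), as a raw triple. -/
noncomputable def BBA2.comb (m₁ m₂ : BBA2) : ℝ × ℝ × ℝ :=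
  ((m₁.mI * m₂.mI + m₁.mI * m₂.mIP + m₁.mIP * m₂.mI) / (1 - BBA2.K m₁ m₂),
   (m₁.mP * m₂.mP + m₁.mP * m₂.mIP + m₁.mIP * m₂.mP) / (1 - BBA2.K m₁ m₂),
   (m₁.mIP * m₂.mIP) / (1 - BBA2.K m₁ m₂))

/-- The Dempster conflict for a raw triple against a BBA. -/
def rawK (t : ℝ × ℝ × ℝ) (m : BBA2) : ℝ := t.1 * m.mP + t.2.1 * m.mI

/-- Dempster combination of a raw triple with a BBA. -/
noncomputable def rawComb (t : ℝ × ℝ × ℝ) (m : BBA2) : ℝ × ℝ × ℝ :=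
  ((t.1 * m.mI + t.1 * m.mIP + t.2.2 * m.mI) / (1 - rawK t m),
   (t.2.1 * m.mP + t.2.1 * m.mIP + t.2.2 * m.mP) / (1 - rawK t m),
   (t.2.2 * m.mIP) / (1 - rawK t m))

/-- Pignistic probability of `I` for a raw triple: `BetP(I) = m({I}) + m({I,P})/2`. -/
noncomputable def rawBetPI (t : ℝ × ℝ × ℝ) : ℝ := t.1 + t.2.2 / 2

/-! Dempster's rule is the conjunctive combination (conflict discarded) followed by a rescaling,
and rescaling does not change the normalized pignistic probability, so all normalizations can be
postponed to the end. There `BetP(I) = N / (N + M)` with `N`, `M` the unnormalized pignistic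
masses of `I` and `P`. By associativity, write the combination as `m_f ∩ s` with
`s = m_r ∩ m_m = (x, y, z)`: moving `ε` from `m_f({I,P})` to `m_f({I})` raises `N` by `ε z / 2`
and lowers `M` by `ε (y + z / 2)`, and `N / (N + M)` is monotone in both. -/

def BBA2.toTriple (m : BBA2) : ℝ × ℝ × ℝ := (m.mI, m.mP, m.mIP)

/-- Conjunctive combination of mass triples on `{I}, {P}, {I,P}`, with the mass of `∅`
(the conflict) discarded. -/
def conjComb (t s : ℝ × ℝ × ℝ) : ℝ × ℝ × ℝ :=
  (t.1 * s.1 + t.1 * s.2.2 + t.2.2 * s.1, t.2.1 * s.2.1 + t.2.1 * s.2.2 + t.2.2 * s.2.1,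
    t.2.2 * s.2.2)

def massSum (t : ℝ × ℝ × ℝ) : ℝ := t.1 + t.2.1 + t.2.2

noncomputable def normalizedBetPI (t : ℝ × ℝ × ℝ) : ℝ := (t.1 + t.2.2 / 2) / massSum t

theorem conjComb_assoc (t r s : ℝ × ℝ × ℝ) :
    conjComb (conjComb t r) s = conjComb t (conjComb r s) := by
  ext <;> simp only [conjComb] <;> ring

theorem conjComb_smul_left (c : ℝ) (t s : ℝ × ℝ × ℝ) :
    conjComb (c • t) s = c • conjComb t s := by
  ext <;> simp only [conjComb, Prod.smul_fst, Prod.smul_snd, smul_eq_mul] <;> ring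

theorem conjComb_nonneg {t s : ℝ × ℝ × ℝ} (ht : 0 ≤ t) (hs : 0 ≤ s) : 0 ≤ conjComb t s := by
  obtain ⟨ht₁, ht₂, ht₃⟩ : 0 ≤ t.1 ∧ 0 ≤ t.2.1 ∧ 0 ≤ t.2.2 := ⟨ht.1, ht.2.1, ht.2.2⟩
  obtain ⟨hs₁, hs₂, hs₃⟩ : 0 ≤ s.1 ∧ 0 ≤ s.2.1 ∧ 0 ≤ s.2.2 := ⟨hs.1, hs.2.1, hs.2.2⟩
  exact ⟨by dsimp [conjComb]; positivity, by dsimp [conjComb]; positivity,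
    by dsimp [conjComb]; positivity⟩

theorem BBA2.toTriple_nonneg (m : BBA2) : 0 ≤ m.toTriple :=
  ⟨m.mI_nonneg, m.mP_nonneg, m.mIP_nonneg⟩

theorem BBA2.massSum_toTriple (m : BBA2) : massSum m.toTriple = 1 := m.sum_one

theorem massSum_conjComb (t : ℝ × ℝ × ℝ) (m : BBA2) :
    massSum (conjComb t m.toTriple) = massSum t - rawK t m := by
  have := m.sum_one
  simp only [massSum, conjComb, rawK, BBA2.toTriple]
  linear_combination (t.1 + t.2.1 + t.2.2) * this

theorem massSum_inv_smul_self {v : ℝ × ℝ × ℝ} (h : massSum v ≠ 0) :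
    massSum ((massSum v)⁻¹ • v) = 1 := by
  simp only [massSum, Prod.smul_fst, Prod.smul_snd, smul_eq_mul, ← mul_add]
  exact inv_mul_cancel₀ h

theorem normalizedBetPI_smul {c : ℝ} (hc : c ≠ 0) (v : ℝ × ℝ × ℝ) :
    normalizedBetPI (c • v) = normalizedBetPI v := by
  simp only [normalizedBetPI, massSum, Prod.smul_fst, Prod.smul_snd, smul_eq_mul]
  calc _ = c * (v.1 + v.2.2 / 2) / (c * (v.1 + v.2.1 + v.2.2)) := by ring
    _ = _ := mul_div_mul_left _ _ hc

theorem rawBetPI_inv_massSum_smul (v : ℝ × ℝ × ℝ) :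
    rawBetPI ((massSum v)⁻¹ • v) = normalizedBetPI v := by
  simp only [rawBetPI, normalizedBetPI, Prod.smul_fst, Prod.smul_snd, smul_eq_mul]
  ring

theorem rawComb_eq_inv_massSum_smul {t : ℝ × ℝ × ℝ} (ht : massSum t = 1) (m : BBA2) :
    rawComb t m = (massSum (conjComb t m.toTriple))⁻¹ • conjComb t m.toTriple := by
  rw [massSum_conjComb, ht]
  simp only [rawComb, conjComb, BBA2.toTriple, Prod.smul_mk, smul_eq_mul, div_eq_inv_mul]

theorem BBA2.comb_eq_inv_massSum_smul (m₁ m₂ : BBA2) :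
    m₁.comb m₂ = (massSum (conjComb m₁.toTriple m₂.toTriple))⁻¹ •
      conjComb m₁.toTriple m₂.toTriple := by
  have : massSum m₁.toTriple - rawK m₁.toTriple m₂ = 1 - m₁.K m₂ := by
    rw [m₁.massSum_toTriple]; rfl
  rw [massSum_conjComb, this]
  simp only [comb, conjComb, toTriple, Prod.smul_mk, smul_eq_mul, div_eq_inv_mul]

theorem rawBetPI_rawComb_comb {m₁ m₂ : BBA2} (h : m₁.K m₂ ≠ 1) (m₃ : BBA2) :
    rawBetPI (rawComb (m₁.comb m₂) m₃) =
      normalizedBetPI (conjComb (conjComb m₁.toTriple m₂.toTriple) m₃.toTriple) := by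
  have hsum : massSum (conjComb m₁.toTriple m₂.toTriple) ≠ 0 := by
    rw [massSum_conjComb, m₁.massSum_toTriple]
    exact sub_ne_zero.mpr h.symm
  rw [rawComb_eq_inv_massSum_smul (m₁.comb_eq_inv_massSum_smul m₂ ▸ massSum_inv_smul_self hsum),
    rawBetPI_inv_massSum_smul, m₁.comb_eq_inv_massSum_smul, conjComb_smul_left,
    normalizedBetPI_smul (inv_ne_zero hsum)]

theorem div_add_le_div_add {a a' b b' : ℝ} (ha : 0 ≤ a) (haa' : a ≤ a') (hb' : 0 ≤ b')
    (hbb' : b' ≤ b) : a / (a + b) ≤ a' / (a' + b') := by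
  have hRHS : 0 ≤ a' / (a' + b') := div_nonneg (ha.trans haa') (by linarith)
  rcases (add_nonneg ha (hb'.trans hbb')).eq_or_lt with h | h
  · rwa [← h, div_zero]
  rcases (add_nonneg (ha.trans haa') hb').eq_or_lt with h' | h'
  · rwa [show a = 0 by linarith, zero_div]
  rw [div_le_div_iff₀ h h']
  nlinarith [mul_le_mul haa' hbb' hb' (ha.trans haa')]

theorem normalizedBetPI_conjComb_le_shift {a b c ε : ℝ} (ha : 0 ≤ a) (hb : 0 ≤ b) (hε : 0 ≤ ε)
    (hεc : ε ≤ c) {s : ℝ × ℝ × ℝ} (hs : 0 ≤ s) :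
    normalizedBetPI (conjComb (a, b, c) s) ≤ normalizedBetPI (conjComb (a + ε, b, c - ε) s) := by
  obtain ⟨x, y, z⟩ := s
  obtain ⟨hx, hy, hz⟩ : 0 ≤ x ∧ 0 ≤ y ∧ 0 ≤ z := ⟨hs.1, hs.2.1, hs.2.2⟩
  have hc : 0 ≤ c := hε.trans hεc
  have hcε : 0 ≤ c - ε := sub_nonneg.mpr hεc
  simp only [normalizedBetPI, massSum, conjComb]
  convert div_add_le_div_add (a := a * x + a * z + c * x + c * z / 2)
    (a' := (a + ε) * x + (a + ε) * z + (c - ε) * x + (c - ε) * z / 2)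
    (b := b * y + b * z + c * y + c * z / 2) (b' := b * y + b * z + (c - ε) * y + (c - ε) * z / 2)
    (by positivity) (by nlinarith) (by positivity) (by nlinarith) using 2 <;> ring

theorem combined_betPI_monotone_general (mf mf' mr mm : BBA2) (ε : ℝ) (hε : 0 ≤ ε)
    (hI : mf'.mI = mf.mI + ε) (hP : mf'.mP = mf.mP) (hIP : mf'.mIP = mf.mIP - ε)
    (hK1 : BBA2.K mf mr < 1)
    (hK1' : BBA2.K mf' mr < 1) :
    rawBetPI (rawComb (BBA2.comb mf mr) mm) ≤
      rawBetPI (rawComb (BBA2.comb mf' mr) mm) := by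
  rw [rawBetPI_rawComb_comb hK1.ne, rawBetPI_rawComb_comb hK1'.ne, conjComb_assoc,
    conjComb_assoc]
  have hmf' : mf'.toTriple = (mf.mI + ε, mf.mP, mf.mIP - ε) := by
    rw [BBA2.toTriple, hI, hP, hIP]
  rw [hmf']
  exact normalizedBetPI_conjComb_le_shift mf.mI_nonneg mf.mP_nonneg hε
    (by linarith [mf'.mIP_nonneg]) (conjComb_nonneg mr.toTriple_nonneg mm.toTriple_nonneg)

/-- If `m_f({I})` increases by `ε ≥ 0`, taken from `m_f({I,P})` with `m_f({P})` fixed,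
then the pignistic probability `BetP(I)` of `(m_f ⊕ m_r) ⊕ m_m` does not decrease. -/
theorem combined_betPI_monotone (mf mf' mr mm : BBA2) (ε : ℝ) (hε : 0 ≤ ε)
    (hI : mf'.mI = mf.mI + ε) (hP : mf'.mP = mf.mP) (hIP : mf'.mIP = mf.mIP - ε)
    (hK1 : BBA2.K mf mr < 1)
    (hK2 : rawK (BBA2.comb mf mr) mm < 1)
    (hK1' : BBA2.K mf' mr < 1)
    (hK2' : rawK (BBA2.comb mf' mr) mm < 1) :
    rawBetPI (rawComb (BBA2.comb mf mr) mm) ≤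
      rawBetPI (rawComb (BBA2.comb mf' mr) mm) :=
  combined_betPI_monotone_general mf mf' mr mm ε hε hI hP hIP hK1 hK1'
end
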